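/- With t(λ) = h(λ)² - 2h'(λ) + 2(2X⁻(λ) + ξλ)X⁺(λ), one has [t(λ), X⁻(μ)] = 4(X⁻(λ)h(μ) - X⁻(μ)h(λ))/(λ-μ) + 2ξ(1 + μh(λ))h(μ) + 4ξλX⁻(μ)X⁺(λ) + 2(ξμ)²X⁺(μ). -/

import Mathlib

set_option linter.unusedSectionVars false
set_option maxHeartbeats 1000000


noncomputable section

/-- The current `h(λ) = Σ_a (h_a/(λ-z_a) + ξ z_a X⁺_a)`. -/
def hCur {A : Type*} [Ring A] [Algebra ℂ A] {N : ℕ} (z : Fin N → ℂ) (ξ : ℂ)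
    (H Xp : Fin N → A) (l : ℂ) : A :=
  ∑ a, ((l - z a)⁻¹ • H a + (ξ * z a) • Xp a)

/-- The current `X⁻(λ) = Σ_a (X⁻_a/(λ-z_a) - (ξ/2)λ h_a)`. -/
def XmCur {A : Type*} [Ring A] [Algebra ℂ A] {N : ℕ} (z : Fin N → ℂ) (ξ : ℂ)
    (H Xm : Fin N → A) (l : ℂ) : A :=
  ∑ a, ((l - z a)⁻¹ • Xm a - (ξ / 2 * l) • H a)

/-- The current `X⁺(λ) = Σ_a X⁺_a/(λ-z_a)`. -/
def XpCur {A : Type*} [Ring A] [Algebra ℂ A] {N : ℕ} (z : Fin N → ℂ)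
    (Xp : Fin N → A) (l : ℂ) : A :=
  ∑ a, (l - z a)⁻¹ • Xp a

/-- The λ-derivative `h'(λ) = -Σ_a h_a/(λ-z_a)²` of the current `h(λ)`. -/
def hdCur {A : Type*} [Ring A] [Algebra ℂ A] {N : ℕ} (z : Fin N → ℂ)
    (H : Fin N → A) (l : ℂ) : A :=
  ∑ a, (-((l - z a) ^ 2)⁻¹) • H a

/-- The generating function `t(λ) = h(λ)² - 2h'(λ) + 2(2X⁻(λ) + ξλ)X⁺(λ)`. -/
def tCur {A : Type*} [Ring A] [Algebra ℂ A] {N : ℕ} (z : Fin N → ℂ) (ξ : ℂ)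
    (H Xp Xm : Fin N → A) (l : ℂ) : A :=
  hCur z ξ H Xp l * hCur z ξ H Xp l - (2 : ℂ) • hdCur z H l +
    ((2 : ℂ) • ((2 : ℂ) • XmCur z ξ H Xm l + (ξ * l) • (1 : A))) * XpCur z Xp l

/-- The sl₂ relations at every site, and commutativity of generators at distinct sites. -/
def GaudinSites {A : Type*} [Ring A] [Algebra ℂ A] {N : ℕ}
    (H Xp Xm : Fin N → A) : Prop :=
  (∀ a, H a * Xp a - Xp a * H a = (2 : ℂ) • Xp a) ∧
  (∀ a, Xp a * Xm a - Xm a * Xp a = H a) ∧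
  (∀ a, H a * Xm a - Xm a * H a = (-2 : ℂ) • Xm a) ∧
  (∀ a b, a ≠ b → ∀ x ∈ ({H a, Xp a, Xm a} : Set A), ∀ y ∈ ({H b, Xp b, Xm b} : Set A),
    Commute x y)

attribute [local instance 100] LieRing.ofAssociativeRing

section Aux

variable {A : Type*} [Ring A] [Algebra ℂ A] {N : ℕ}

-- (machinery assumed from aux2, inline here)
lemma myLieSum (x : A) (u : Fin N → A) : ⁅x, ∑ a, u a⁆ = ∑ a, ⁅x, u a⁆ := by
  induction (Finset.univ : Finset (Fin N)) using Finset.cons_induction with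
  | empty => simp
  | cons a s ha ih => simp [Finset.sum_insert ha, lie_add, ih]

lemma mySumLie (y : A) (u : Fin N → A) : ⁅∑ a, u a, y⁆ = ∑ a, ⁅u a, y⁆ := by
  induction (Finset.univ : Finset (Fin N)) using Finset.cons_induction with
  | empty => simp
  | cons a s ha ih => simp [Finset.sum_insert ha, add_lie, ih]

lemma sumLieSum (u v : Fin N → A) (hoff : ∀ a b, a ≠ b → ⁅u a, v b⁆ = 0) :
    ⁅∑ a, u a, ∑ b, v b⁆ = ∑ a, ⁅u a, v a⁆ := by
  rw [mySumLie]
  refine Finset.sum_congr rfl fun a _ => ?_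
  rw [myLieSum]
  exact Finset.sum_eq_single a (fun b _ hb => hoff a b (Ne.symm hb)) (by simp)

variable (H Xp Xm : Fin N → A)

def sS (c1 c2 c3 : Fin N → ℂ) : A := ∑ a, (c1 a • H a + c2 a • Xp a + c3 a • Xm a)

lemma sS_smul (r : ℂ) (c1 c2 c3 : Fin N → ℂ) :
    r • sS H Xp Xm c1 c2 c3 =
      sS H Xp Xm (fun a => r * c1 a) (fun a => r * c2 a) (fun a => r * c3 a) := by
  unfold sS
  rw [Finset.smul_sum]
  exact Finset.sum_congr rfl fun a _ => by module

lemma sS_add (c1 c2 c3 e1 e2 e3 : Fin N → ℂ) :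
    sS H Xp Xm c1 c2 c3 + sS H Xp Xm e1 e2 e3 =
      sS H Xp Xm (fun a => c1 a + e1 a) (fun a => c2 a + e2 a) (fun a => c3 a + e3 a) := by
  unfold sS
  rw [← Finset.sum_add_distrib]
  exact Finset.sum_congr rfl fun a _ => by module

lemma sS_congr {c1 c2 c3 e1 e2 e3 : Fin N → ℂ}
    (h : ∀ a, c1 a = e1 a ∧ c2 a = e2 a ∧ c3 a = e3 a) :
    sS H Xp Xm c1 c2 c3 = sS H Xp Xm e1 e2 e3 :=
  Finset.sum_congr rfl fun a _ => by rw [(h a).1, (h a).2.1, (h a).2.2]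

lemma sS_lie (hG : GaudinSites H Xp Xm) (c1 c2 c3 e1 e2 e3 : Fin N → ℂ) :
    ⁅sS H Xp Xm c1 c2 c3, sS H Xp Xm e1 e2 e3⁆ =
      sS H Xp Xm (fun a => c2 a * e3 a - c3 a * e2 a)
        (fun a => 2 * (c1 a * e2 a - c2 a * e1 a))
        (fun a => -2 * (c1 a * e3 a - c3 a * e1 a)) := by
  obtain ⟨h1, h2, h3, h4⟩ := hG
  have bHXp : ∀ a, ⁅H a, Xp a⁆ = (2 : ℂ) • Xp a := fun a => by rw [Ring.lie_def, h1 a]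
  have bXpXm : ∀ a, ⁅Xp a, Xm a⁆ = H a := fun a => by rw [Ring.lie_def, h2 a]
  have bHXm : ∀ a, ⁅H a, Xm a⁆ = (-2 : ℂ) • Xm a := fun a => by rw [Ring.lie_def, h3 a]
  have bXpH : ∀ a, ⁅Xp a, H a⁆ = -((2 : ℂ) • Xp a) := fun a => by rw [← lie_skew, bHXp]
  have bXmH : ∀ a, ⁅Xm a, H a⁆ = -((-2 : ℂ) • Xm a) := fun a => by rw [← lie_skew, bHXm]
  have bXmXp : ∀ a, ⁅Xm a, Xp a⁆ = -(H a) := fun a => by rw [← lie_skew, bXpXm]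
  unfold sS
  rw [sumLieSum]
  · refine Finset.sum_congr rfl fun a _ => ?_
    simp only [add_lie, lie_add, smul_lie, lie_smul, bHXp a, bXpXm a, bHXm a, bXpH a,
      bXmH a, bXmXp a, lie_self]
    module
  · intro a b hab
    have l0 : ∀ x ∈ ({H a, Xp a, Xm a} : Set A), ∀ y ∈ ({H b, Xp b, Xm b} : Set A),
        ⁅x, y⁆ = 0 := fun x hx y hy => (h4 a b hab x hx y hy).lie_eq
    simp only [add_lie, lie_add, smul_lie, lie_smul,
      l0 (H a) (by simp) (H b) (by simp), l0 (H a) (by simp) (Xp b) (by simp),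
      l0 (H a) (by simp) (Xm b) (by simp), l0 (Xp a) (by simp) (H b) (by simp),
      l0 (Xp a) (by simp) (Xp b) (by simp), l0 (Xp a) (by simp) (Xm b) (by simp),
      l0 (Xm a) (by simp) (H b) (by simp), l0 (Xm a) (by simp) (Xp b) (by simp),
      l0 (Xm a) (by simp) (Xm b) (by simp), smul_zero, add_zero, zero_add]

variable (z : Fin N → ℂ) (ξ : ℂ)

lemma hCur_eq (l : ℂ) : hCur z ξ H Xp l =
    sS H Xp Xm (fun a => (l - z a)⁻¹) (fun a => ξ * z a) (fun _ => 0) := by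
  unfold hCur sS
  exact Finset.sum_congr rfl fun a _ => by module

lemma XmCur_eq (l : ℂ) : XmCur z ξ H Xm l =
    sS H Xp Xm (fun _ => -(ξ / 2 * l)) (fun _ => 0) (fun a => (l - z a)⁻¹) := by
  unfold XmCur sS
  exact Finset.sum_congr rfl fun a _ => by module

lemma XpCur_eq (l : ℂ) : XpCur z Xp l =
    sS H Xp Xm (fun _ => 0) (fun a => (l - z a)⁻¹) (fun _ => 0) := by
  unfold XpCur sS
  exact Finset.sum_congr rfl fun a _ => by module

lemma hdCur_eq (l : ℂ) : hdCur z H l =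
    sS H Xp Xm (fun a => -((l - z a) ^ 2)⁻¹) (fun _ => 0) (fun _ => 0) := by
  unfold hdCur sS
  exact Finset.sum_congr rfl fun a _ => by module

end Aux


section Brackets

section Scalar

lemma aux_cancel {x : ℂ} (hx : x ≠ 0) : x * x⁻¹ = 1 := mul_inv_cancel₀ hx

lemma aux_zf (x w : ℂ) (hx : x - w ≠ 0) : w * (x - w)⁻¹ = x * (x - w)⁻¹ - 1 := by
  linear_combination (-1 : ℂ) * aux_cancel hx

lemma aux_pf (x y w : ℂ) (hx : x - w ≠ 0) (hy : y - w ≠ 0) (hxy : x - y ≠ 0) :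
    (x - w)⁻¹ * (y - w)⁻¹ = (x - y)⁻¹ * (y - w)⁻¹ - (x - y)⁻¹ * (x - w)⁻¹ := by
  linear_combination ((x - y)⁻¹ * (y - w)⁻¹) * aux_cancel hx -
    ((x - y)⁻¹ * (x - w)⁻¹) * aux_cancel hy - ((x - w)⁻¹ * (y - w)⁻¹) * aux_cancel hxy

end Scalar


variable {A : Type*} [Ring A] [Algebra ℂ A] {N : ℕ}
variable (H Xp Xm : Fin N → A) (z : Fin N → ℂ) (ξ : ℂ) {l m : ℂ}

lemma lie_h_Xm (hG : GaudinSites H Xp Xm) (hl : l ∉ Set.range z) (hm : m ∉ Set.range z)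
    (hlm : l ≠ m) :
    ⁅hCur z ξ H Xp l, XmCur z ξ H Xm m⁆ =
      (2 * (l - m)⁻¹) • XmCur z ξ H Xm l + (-(2 * (l - m)⁻¹)) • XmCur z ξ H Xm m +
        (ξ * m) • hCur z ξ H Xp m := by
  have hlm' : l - m ≠ 0 := sub_ne_zero.mpr hlm
  rw [hCur_eq H Xp Xm z ξ l, XmCur_eq H Xp Xm z ξ m, XmCur_eq H Xp Xm z ξ l,
    hCur_eq H Xp Xm z ξ m, sS_lie H Xp Xm hG, sS_smul, sS_smul, sS_smul, sS_add, sS_add]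
  refine sS_congr H Xp Xm fun a => ?_
  have h1 : l - z a ≠ 0 := sub_ne_zero.mpr fun h => hl ⟨a, h.symm⟩
  have h2 : m - z a ≠ 0 := sub_ne_zero.mpr fun h => hm ⟨a, h.symm⟩
  refine ⟨?_, ?_, ?_⟩
  · linear_combination ξ * aux_zf m (z a) h2 + ξ * aux_cancel hlm'
  · ring
  · linear_combination (-2 : ℂ) * aux_pf l m (z a) h1 h2 hlm'

lemma lie_h_h (hG : GaudinSites H Xp Xm) (hl : l ∉ Set.range z) (hm : m ∉ Set.range z) :
    ⁅hCur z ξ H Xp l, hCur z ξ H Xp m⁆ =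
      (2 * ξ * l) • XpCur z Xp l + (-(2 * ξ * m)) • XpCur z Xp m := by
  rw [hCur_eq H Xp Xm z ξ l, hCur_eq H Xp Xm z ξ m, XpCur_eq H Xp Xm z l,
    XpCur_eq H Xp Xm z m, sS_lie H Xp Xm hG, sS_smul, sS_smul, sS_add]
  refine sS_congr H Xp Xm fun a => ?_
  have h1 : l - z a ≠ 0 := sub_ne_zero.mpr fun h => hl ⟨a, h.symm⟩
  have h2 : m - z a ≠ 0 := sub_ne_zero.mpr fun h => hm ⟨a, h.symm⟩
  refine ⟨?_, ?_, ?_⟩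
  · ring
  · linear_combination (2 * ξ) * aux_zf l (z a) h1 - (2 * ξ) * aux_zf m (z a) h2
  · ring

lemma lie_Xp_Xm (hG : GaudinSites H Xp Xm) (hl : l ∉ Set.range z) (hm : m ∉ Set.range z)
    (hlm : l ≠ m) :
    ⁅XpCur z Xp l, XmCur z ξ H Xm m⁆ =
      (l - m)⁻¹ • hCur z ξ H Xp m + (-(l - m)⁻¹) • hCur z ξ H Xp l +
        (ξ * m) • XpCur z Xp l := by
  have hlm' : l - m ≠ 0 := sub_ne_zero.mpr hlm
  rw [XpCur_eq H Xp Xm z l, XmCur_eq H Xp Xm z ξ m, hCur_eq H Xp Xm z ξ m,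
    hCur_eq H Xp Xm z ξ l, sS_lie H Xp Xm hG, sS_smul, sS_smul, sS_smul, sS_add, sS_add]
  refine sS_congr H Xp Xm fun a => ?_
  have h1 : l - z a ≠ 0 := sub_ne_zero.mpr fun h => hl ⟨a, h.symm⟩
  have h2 : m - z a ≠ 0 := sub_ne_zero.mpr fun h => hm ⟨a, h.symm⟩
  refine ⟨?_, ?_, ?_⟩
  · linear_combination aux_pf l m (z a) h1 h2 hlm'
  · ring
  · ring

lemma lie_Xm_Xm (hG : GaudinSites H Xp Xm) :
    ⁅XmCur z ξ H Xm l, XmCur z ξ H Xm m⁆ =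
      (ξ * l) • XmCur z ξ H Xm m + (-(ξ * m)) • XmCur z ξ H Xm l := by
  rw [XmCur_eq H Xp Xm z ξ l, XmCur_eq H Xp Xm z ξ m, sS_lie H Xp Xm hG,
    sS_smul, sS_smul, sS_add]
  exact sS_congr H Xp Xm fun a => ⟨by ring, by ring, by ring⟩

lemma lie_hd_Xm (hG : GaudinSites H Xp Xm) (hl : l ∉ Set.range z) (hm : m ∉ Set.range z)
    (hlm : l ≠ m) :
    ⁅hdCur z H l, XmCur z ξ H Xm m⁆ =
      (l - m)⁻¹ • ⁅hCur z ξ H Xp l, XmCur z ξ H Xm l⁆ +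
        (-(2 * ((l - m)⁻¹) ^ 2)) • XmCur z ξ H Xm l +
        (2 * ((l - m)⁻¹) ^ 2) • XmCur z ξ H Xm m +
        (-(ξ * l * (l - m)⁻¹)) • hCur z ξ H Xp l := by
  have hlm' : l - m ≠ 0 := sub_ne_zero.mpr hlm
  rw [hdCur_eq H Xp Xm z l, XmCur_eq H Xp Xm z ξ m, hCur_eq H Xp Xm z ξ l,
    XmCur_eq H Xp Xm z ξ l, sS_lie H Xp Xm hG, sS_lie H Xp Xm hG,
    sS_smul, sS_smul, sS_smul, sS_smul, sS_add, sS_add, sS_add]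
  refine sS_congr H Xp Xm fun a => ?_
  have h1 : l - z a ≠ 0 := sub_ne_zero.mpr fun h => hl ⟨a, h.symm⟩
  have h2 : m - z a ≠ 0 := sub_ne_zero.mpr fun h => hm ⟨a, h.symm⟩
  have hQ : ((l - z a) ^ 2)⁻¹ = (l - z a)⁻¹ * (l - z a)⁻¹ := by rw [sq, mul_inv]
  refine ⟨?_, ?_, ?_⟩
  · linear_combination (-(ξ * (l - m)⁻¹)) * aux_zf l (z a) h1 -
      (ξ * (l - m)⁻¹) * aux_cancel hlm'
  · ring
  · linear_combination (2 * (m - z a)⁻¹) * hQ +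
      (2 * ((l - z a)⁻¹ + (l - m)⁻¹)) * aux_pf l m (z a) h1 h2 hlm'

end Brackets

/-- `[t(λ), X⁻(μ)] = 4(X⁻(λ)h(μ) - X⁻(μ)h(λ))/(λ-μ) + 2ξ(1 + μh(λ))h(μ)
+ 4ξλX⁻(μ)X⁺(λ) + 2(ξμ)²X⁺(μ)`. -/
theorem tCur_XmCur_comm {A : Type*} [Ring A] [Algebra ℂ A] {N : ℕ} (z : Fin N → ℂ) (ξ : ℂ)
    (H Xp Xm : Fin N → A) (hz : Function.Injective z) (hG : GaudinSites H Xp Xm)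
    (l m : ℂ) (hl : l ∉ Set.range z) (hm : m ∉ Set.range z) (hlm : l ≠ m) :
    tCur z ξ H Xp Xm l * XmCur z ξ H Xm m - XmCur z ξ H Xm m * tCur z ξ H Xp Xm l =
      (4 * (l - m)⁻¹) • (XmCur z ξ H Xm l * hCur z ξ H Xp m -
          XmCur z ξ H Xm m * hCur z ξ H Xp l) +
        (2 * ξ) • (((1 : A) + m • hCur z ξ H Xp l) * hCur z ξ H Xp m) +
        (4 * ξ * l) • (XmCur z ξ H Xm m * XpCur z Xp l) +
        (2 * (ξ * m) ^ 2) • XpCur z Xp m := by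
  have hlm' : l - m ≠ 0 := sub_ne_zero.mpr hlm
  have mul_lie' : ∀ a b c : A, ⁅a * b, c⁆ = a * ⁅b, c⁆ + ⁅a, c⁆ * b := fun a b c => by
    simp only [Ring.lie_def]; noncomm_ring
  have one_lie' : ∀ x : A, ⁅(1 : A), x⁆ = 0 := fun x => by simp [Ring.lie_def]
  have r1 : hCur z ξ H Xp l * XmCur z ξ H Xm l =
      XmCur z ξ H Xm l * hCur z ξ H Xp l + ⁅hCur z ξ H Xp l, XmCur z ξ H Xm l⁆ := by
    rw [Ring.lie_def]; noncomm_ring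
  have r2 : hCur z ξ H Xp l * XmCur z ξ H Xm m =
      XmCur z ξ H Xm m * hCur z ξ H Xp l + ⁅hCur z ξ H Xp l, XmCur z ξ H Xm m⁆ := by
    rw [Ring.lie_def]; noncomm_ring
  have r3 : hCur z ξ H Xp m * hCur z ξ H Xp l =
      hCur z ξ H Xp l * hCur z ξ H Xp m - ⁅hCur z ξ H Xp l, hCur z ξ H Xp m⁆ := by
    rw [Ring.lie_def]; noncomm_ring
  rw [lie_h_Xm H Xp Xm z ξ hG hl hm hlm] at r2
  rw [lie_h_h H Xp Xm z ξ hG hl hm] at r3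
  rw [← Ring.lie_def]
  simp only [tCur, sub_lie, add_lie, mul_lie', smul_lie, one_lie', smul_zero, add_zero]
  rw [lie_h_Xm H Xp Xm z ξ hG hl hm hlm, lie_Xp_Xm H Xp Xm z ξ hG hl hm hlm,
    lie_Xm_Xm H Xp Xm z ξ hG, lie_hd_Xm H Xp Xm z ξ hG hl hm hlm]
  simp only [mul_add, add_mul, mul_smul_comm, smul_mul_assoc, mul_one, one_mul, smul_add,
    smul_sub, smul_smul]
  rw [r1, r2, r3]
  match_scalars <;> field_simp <;> ring


end
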